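/- For a fixed δ ∈ S, the set of conditions p ∈ P whose domain contains δ ∪ {η_δ(i) : i < ω₁} is dense in P. -/

import Mathlib

noncomputable def om1 : Ordinal := (Cardinal.aleph 1).ord
noncomputable def om2 : Ordinal := (Cardinal.aleph 2).ord

/-- A club (closed unbounded) subset of the ordinal `Λ`. -/
def IsClubIn (Λ : Ordinal) (C : Set Ordinal) : Prop :=
  C ⊆ Set.Iio Λ ∧ (∀ a < Λ, ∃ b ∈ C, a ≤ b) ∧
    (∀ a, a < Λ → a ≠ 0 → (∀ b < a, ∃ c ∈ C, b ≤ c ∧ c < a) → a ∈ C)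

/-- `T` is non-stationary in `Λ`. -/
def NonStatIn (Λ : Ordinal) (T : Set Ordinal) : Prop :=
  ∃ C : Set Ordinal, IsClubIn Λ C ∧ T ∩ C = ∅

/-- Conditions of the uniformization forcing: partial functions `p : ω₂ ⇀ 2`
    (coded as `Ordinal → Option Bool`) with domain of size `≤ ℵ₁` such that
    for every `δ ∈ S` the error set
    `{i ∈ E₀ : η_δ(i) ∈ dom p ∧ p(η_δ(i)) ≠ c_δ(i)}` is non-stationary. -/
def IsCond (S : Set Ordinal) (η : Ordinal → Ordinal → Ordinal)
    (c : Ordinal → Ordinal → Bool) (E₀ : Set Ordinal)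
    (p : Ordinal → Option Bool) : Prop :=
  (∀ α, p α ≠ none → α < om2) ∧
  Cardinal.mk ↥{α | p α ≠ none} ≤ Cardinal.aleph 1 ∧
  ∀ δ ∈ S, NonStatIn om1
    {i | i < om1 ∧ i ∈ E₀ ∧ ∃ b, p (η δ i) = some b ∧ b ≠ c δ i}

/-- `q` extends `p` (i.e. `q ≤ p` in the reverse-inclusion order). -/
def Extends (q p : Ordinal → Option Bool) : Prop :=
  ∀ α b, p α = some b → q α = some b

/-! Below `δ`, every point missing from `p` gets the colour wanted by the ladder through it that
comes first in a ranking of the at most `ℵ₁` ladders `η_d`, `d ∈ S`, `d ≤ δ`, by an injection into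
`ω₁`. Two distinct ladders share only a bounded set of indices: the points of the ladder of `d'`
lying below `d` are bounded below `d` (trivially if `d' < d`; if `d' > d`, because they carry
countably many indices and `ℵ₀ < cf d`), and from some index on the ladder of `d` is past that
bound. Each ladder is preceded by only countably many others in the ranking, so it gets its own
colours from some countable index on; ladders of ordinals above `δ` meet `δ` only along a bounded
set of indices. So every new error set is bounded, and a nonstationary set together with a bounded
set is still nonstationary.
-/

open Cardinal Set

section Club

variable {Λ β : Ordinal} {C T T' : Set Ordinal}

theorem IsClubIn.inter_Ici (hC : IsClubIn Λ C) (hβ : β < Λ) : IsClubIn Λ (C ∩ Ici β) := by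
  obtain ⟨hCΛ, hunbdd, hclosed⟩ := hC
  refine ⟨fun x hx => hCΛ hx.1, fun a ha => ?_, fun a haΛ ha0 hacc => ⟨?_, ?_⟩⟩
  · obtain ⟨b, hbC, hab⟩ := hunbdd (max a β) (max_lt ha hβ)
    exact ⟨b, ⟨hbC, (le_max_right a β).trans hab⟩, (le_max_left a β).trans hab⟩
  · exact hclosed a haΛ ha0 fun b hb =>
      (hacc b hb).imp fun c ⟨⟨hcC, _⟩, hbc, hca⟩ => ⟨hcC, hbc, hca⟩
  · obtain ⟨c, ⟨-, hβc⟩, -, hca⟩ := hacc 0 (pos_iff_ne_zero.2 ha0)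
    exact hβc.trans hca.le

theorem NonStatIn.mono (h : NonStatIn Λ T) (hT : T' ⊆ T) : NonStatIn Λ T' := by
  obtain ⟨C, hC, hTC⟩ := h
  exact ⟨C, hC, subset_empty_iff.1 (hTC ▸ inter_subset_inter_left C hT)⟩

theorem NonStatIn.union_Iio (h : NonStatIn Λ T) (hβ : β < Λ) : NonStatIn Λ (T ∪ Iio β) := by
  obtain ⟨C, hC, hTC⟩ := h
  refine ⟨C ∩ Ici β, hC.inter_Ici hβ, eq_empty_iff_forall_notMem.2 ?_⟩
  rintro x ⟨hxT | hxβ, hxC, hβx⟩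
  · exact hTC.subset ⟨hxT, hxC⟩
  · exact not_lt.2 hβx (mem_Iio.1 hxβ)

end Club

theorem Ordinal.exists_forall_lt_of_countable {ι : Type*} [Countable ι] {f : ι → Ordinal.{u}}
    {a : Ordinal.{u}} (ha : ℵ₀ < a.cof) (hf : ∀ i, f i < a) : ∃ γ < a, ∀ i, f i < γ := by
  refine ⟨⨆ i, f i + 1, Ordinal.lift_iSup_add_one_lt_of_lt_cof ?_ hf, fun i => ?_⟩
  · rw [← Ordinal.lift_cof]
    exact (lift_le_aleph0.2 mk_le_aleph0).trans_lt (aleph0_lt_lift.2 ha)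
  · have hbdd : BddAbove (range fun i => f i + 1) :=
      ⟨a, forall_mem_range.2 fun i => Order.add_one_le_of_lt (hf i)⟩
    exact (Order.lt_add_one_iff.2 le_rfl).trans_le (le_ciSup hbdd i)

theorem aleph0_lt_cof_om1 : ℵ₀ < om1.cof := by
  rw [om1, isRegular_aleph_one.cof_ord]
  exact aleph0_lt_aleph_one

theorem countable_Iio_of_lt_om1 {j : Ordinal} (hj : j < om1) : (Iio j).Countable := by
  rw [← le_aleph0_iff_set_countable, mk_Iio_ordinal, lift_le_aleph0, ← lt_aleph_one_iff]
  exact lt_ord.1 hj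

theorem mk_Iio_om1 : #(Iio om1.{u}) = ℵ₁ := by
  rw [mk_Iio_ordinal, om1, card_ord, lift_aleph, Ordinal.lift_one]

theorem mk_Iio_le_aleph_one_of_lt_om2 {α : Ordinal} (h : α < om2) : #(Iio α) ≤ ℵ₁ := by
  have hα : α.card < ℵ_ (1 + 1) := by
    rw [one_add_one_eq_two]
    exact lt_ord.1 h
  rwa [mk_Iio_ordinal, lift_le_aleph_one, ← Order.lt_succ_iff, succ_aleph]

section PriorityColoring

variable {K X : Type*} (ρ : K → Ordinal) (L : K → Ordinal → X) (col : K → Ordinal → Bool)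

open Classical in
/-- A point lying on several ladders gets the colour wanted by the ladder of least priority `ρ`. -/
noncomputable def priorityColoring (x : X) : Bool :=
  if h : {y : K × Ordinal | y.2 < om1 ∧ L y.1 y.2 = x}.Nonempty then
    col (Function.argminOn (ρ ∘ Prod.fst) _ h).1 (Function.argminOn (ρ ∘ Prod.fst) _ h).2
  else false

variable {ρ L}

theorem exists_forall_priorityColoring_eq (hρ : Function.Injective ρ) (hρ_lt : ∀ k, ρ k < om1)
    (hL : ∀ k, InjOn (L k) (Iio om1))
    (hoverlap : ∀ k k', k' ≠ k → ∃ i₁ < om1, ∀ i < om1, ∀ j < om1, L k' j = L k i → i < i₁)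
    (k : K) : ∃ β < om1, ∀ i, β ≤ i → i < om1 → priorityColoring ρ L col (L k i) = col k i := by
  -- Only the countably many ladders of smaller priority can overrule ladder `k`, each on a bounded
  -- set of indices.
  choose f hf_lt hf using fun k' : {k' // ρ k' < ρ k} => hoverlap k k' (ne_of_apply_ne ρ k'.2.ne)
  have : Countable (Iio (ρ k)) := (countable_Iio_of_lt_om1 (hρ_lt k)).to_subtype
  have : Countable {k' // ρ k' < ρ k} :=
    Function.Injective.countable (f := fun k' => (⟨ρ k'.1, k'.2⟩ : Iio (ρ k)))
      fun k₁ k₂ h => Subtype.ext (hρ (congrArg Subtype.val h))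
  obtain ⟨β, hβ, hfβ⟩ := Ordinal.exists_forall_lt_of_countable aleph0_lt_cof_om1 hf_lt
  refine ⟨β, hβ, fun i hβi hi => ?_⟩
  have hne : {y : K × Ordinal | y.2 < om1 ∧ L y.1 y.2 = L k i}.Nonempty := ⟨(k, i), hi, rfl⟩
  rw [priorityColoring, dif_pos hne]
  set y := Function.argminOn (ρ ∘ Prod.fst) _ hne
  obtain ⟨hy_lt, hy⟩ : y.2 < om1 ∧ L y.1 y.2 = L k i := Function.argminOn_mem _ _ hne
  have hmem : (k, i) ∈ {y : K × Ordinal | y.2 < om1 ∧ L y.1 y.2 = L k i} := ⟨hi, rfl⟩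
  rcases (Function.argminOn_le (ρ ∘ Prod.fst) _ hmem).lt_or_eq with hlt | heq
  · exact absurd (hf ⟨y.1, hlt⟩ i hi y.2 hy_lt hy) (not_lt.2 ((hfβ _).le.trans hβi))
  · have hk : y.1 = k := hρ heq
    rw [hk, hL k hy_lt hi (by rwa [hk] at hy)]

end PriorityColoring

structure IsLadderSystem (S : Set Ordinal) (η : Ordinal → Ordinal → Ordinal) : Prop where
  aleph0_lt_cof : ∀ δ ∈ S, ℵ₀ < δ.cof
  lt : ∀ δ ∈ S, ∀ i < om1, η δ i < δ
  strictMonoOn : ∀ δ ∈ S, StrictMonoOn (η δ) (Iio om1)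
  cofinal : ∀ δ ∈ S, ∀ β < δ, ∃ i < om1, β ≤ η δ i

namespace IsLadderSystem

variable {S : Set Ordinal} {η : Ordinal → Ordinal → Ordinal} {d d' γ : Ordinal}

theorem exists_index_bound (h : IsLadderSystem S η) (hd : d ∈ S) (hγ : γ < d) :
    ∃ i₁ < om1, ∀ i < om1, η d i < γ → i < i₁ := by
  obtain ⟨i₁, hi₁, hγi₁⟩ := h.cofinal d hd γ hγ
  exact ⟨i₁, hi₁, fun i hi hiγ => ((h.strictMonoOn d hd).lt_iff_lt hi hi₁).1 (hiγ.trans_le hγi₁)⟩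

theorem exists_bound_of_ne (h : IsLadderSystem S η) (hd : d ∈ S) (hd' : d' ∈ S) (hne : d' ≠ d) :
    ∃ γ < d, ∀ j < om1, η d' j < d → η d' j < γ := by
  rcases hne.lt_or_gt with hlt | hgt
  · exact ⟨d', hlt, fun j hj _ => h.lt d' hd' j hj⟩
  · obtain ⟨j₀, hj₀, hdj₀⟩ := h.cofinal d' hd' d hgt
    have hbelow : {j | j < om1 ∧ η d' j < d} ⊆ Iio j₀ := fun j hj =>
      ((h.strictMonoOn d' hd').lt_iff_lt hj.1 hj₀).1 (hj.2.trans_le hdj₀)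
    have : Countable {j | j < om1 ∧ η d' j < d} :=
      ((countable_Iio_of_lt_om1 hj₀).mono hbelow).to_subtype
    obtain ⟨γ, hγ, hγ'⟩ := Ordinal.exists_forall_lt_of_countable (h.aleph0_lt_cof d hd)
      (f := fun j : {j | j < om1 ∧ η d' j < d} => η d' j) fun j => j.2.2
    exact ⟨γ, hγ, fun j hj hjd => hγ' ⟨j, hj, hjd⟩⟩

theorem exists_overlap_bound (h : IsLadderSystem S η) (hd : d ∈ S) (hd' : d' ∈ S) (hne : d' ≠ d) :
    ∃ i₁ < om1, ∀ i < om1, ∀ j < om1, η d' j = η d i → i < i₁ := by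
  obtain ⟨γ, hγd, hγ⟩ := h.exists_bound_of_ne hd hd' hne
  obtain ⟨i₁, hi₁, hindex⟩ := h.exists_index_bound hd hγd
  refine ⟨i₁, hi₁, fun i hi j hj hji => hindex i hi ?_⟩
  rw [← hji]
  exact hγ j hj (hji ▸ h.lt d hd i hi)

theorem exists_coloring (h : IsLadderSystem S η) (c : Ordinal → Ordinal → Bool) {D : Set Ordinal}
    (hDS : D ⊆ S) (hD : #D ≤ ℵ₁) :
    ∃ v : Ordinal → Bool, ∀ d ∈ D, ∃ β < om1, ∀ i, β ≤ i → i < om1 → v (η d i) = c d i := by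
  obtain ⟨e⟩ : Nonempty (D ↪ Iio om1) := by rwa [← le_def, mk_Iio_om1]
  refine ⟨priorityColoring (fun d => (e d : Ordinal)) (fun d : D => η d) (fun d => c d),
    fun d hd => exists_forall_priorityColoring_eq _ ?_ (fun d => (e d).2)
      (fun d => (h.strictMonoOn d (hDS d.2)).injOn) ?_ ⟨d, hd⟩⟩
  · exact Subtype.val_injective.comp e.injective
  · exact fun k k' hne => h.exists_overlap_bound (hDS k.2) (hDS k'.2) (Subtype.coe_ne_coe.2 hne)

end IsLadderSystem

section ExtendBelow

variable {p : Ordinal → Option Bool} {δ α : Ordinal} {v : Ordinal → Bool}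

noncomputable def extendBelow (p : Ordinal → Option Bool) (δ : Ordinal) (v : Ordinal → Bool) :
    Ordinal → Option Bool :=
  fun α => if α < δ then some ((p α).getD (v α)) else p α

theorem extendBelow_extends : Extends (extendBelow p δ v) p := by
  intro α b hb
  unfold extendBelow
  split_ifs <;> simp [hb]

theorem extendBelow_ne_none (hα : α < δ) : extendBelow p δ v α ≠ none := by
  simp [extendBelow, hα]

theorem extendBelow_eq_some {b : Bool} (h : extendBelow p δ v α = some b) :
    p α = some b ∨ (α < δ ∧ v α = b) := by
  unfold extendBelow at h
  split_ifs at h with hα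
  · cases hp : p α <;> simp_all
  · exact Or.inl h

theorem isCond_extendBelow {S : Set Ordinal} {η : Ordinal → Ordinal → Ordinal}
    {c : Ordinal → Ordinal → Bool} {E₀ : Set Ordinal} (hp : IsCond S η c E₀ p) (hδ : δ < om2)
    (hv : ∀ d ∈ S, ∃ β < om1, ∀ i, β ≤ i → i < om1 → η d i < δ → v (η d i) = c d i) :
    IsCond S η c E₀ (extendBelow p δ v) := by
  obtain ⟨hdom, hcard, herr⟩ := hp
  have hsupp : {α | extendBelow p δ v α ≠ none} ⊆ {α | p α ≠ none} ∪ Iio δ := by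
    intro α hα
    obtain ⟨b, hb⟩ := Option.ne_none_iff_exists'.1 hα
    rcases extendBelow_eq_some hb with hpb | ⟨hαδ, -⟩
    · exact Or.inl (by simp [hpb])
    · exact Or.inr hαδ
  refine ⟨fun α hα => (hsupp hα).elim (hdom α) (fun h => h.trans hδ), ?_, fun d hd => ?_⟩
  · calc #{α | extendBelow p δ v α ≠ none}
        ≤ #({α | p α ≠ none} ∪ Iio δ : Set Ordinal) := mk_le_mk_of_subset hsupp
      _ ≤ #{α | p α ≠ none} + #(Iio δ) := mk_union_le _ _
      _ ≤ ℵ₁ + ℵ₁ := add_le_add hcard (mk_Iio_le_aleph_one_of_lt_om2 hδ)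
      _ = ℵ₁ := add_eq_self (aleph0_le_aleph 1)
  · obtain ⟨β, hβ, hvβ⟩ := hv d hd
    refine ((herr d hd).union_Iio hβ).mono ?_
    rintro i ⟨hi, hiE, b, hb, hbc⟩
    rcases extendBelow_eq_some hb with hpb | ⟨hlt, rfl⟩
    · exact Or.inl ⟨hi, hiE, _, hpb, hbc⟩
    · exact Or.inr (lt_of_not_ge fun hβi => hbc (hvβ i hβi hi hlt))

end ExtendBelow

theorem stmt15_general
    (S : Set Ordinal)
    (hS : ∀ δ ∈ S, δ < om2 ∧ δ.cof = Cardinal.aleph 1)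
    (η : Ordinal → Ordinal → Ordinal)
    (hlt : ∀ δ ∈ S, ∀ i < om1, η δ i < δ)
    (hmono : ∀ δ ∈ S, ∀ i j : Ordinal, i < j → j < om1 → η δ i < η δ j)
    (hcofinal : ∀ δ ∈ S, ∀ β < δ, ∃ i, i < om1 ∧ β ≤ η δ i)
    (c : Ordinal → Ordinal → Bool) (E₀ : Set Ordinal)
    (δ : Ordinal) (hδ : δ ∈ S)
    (p : Ordinal → Option Bool) (hp : IsCond S η c E₀ p) :
    ∃ q : Ordinal → Option Bool, IsCond S η c E₀ q ∧ Extends q p ∧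
      (∀ β < δ, q β ≠ none) ∧ (∀ i < om1, q (η δ i) ≠ none) := by
  have hη : IsLadderSystem S η :=
    ⟨fun d hd => (hS d hd).2 ▸ aleph0_lt_aleph_one, hlt,
      fun d hd i _ j hj hij => hmono d hd i j hij hj, hcofinal⟩
  have hδ2 : δ < om2 := (hS δ hδ).1
  have hD : #{d | d ∈ S ∧ d ≤ δ} ≤ ℵ₁ :=
    (mk_le_mk_of_subset fun d hd => Order.lt_succ_iff.2 hd.2).trans
      (mk_Iio_le_aleph_one_of_lt_om2 ((isSuccLimit_ord (aleph0_le_aleph 2)).succ_lt hδ2))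
  obtain ⟨v, hv⟩ := hη.exists_coloring c (fun d hd => hd.1) hD
  refine ⟨extendBelow p δ v, isCond_extendBelow hp hδ2 fun d hd => ?_, extendBelow_extends,
    fun β hβ => extendBelow_ne_none hβ, fun i hi => extendBelow_ne_none (hlt δ hδ i hi)⟩
  rcases le_or_gt d δ with hle | hgt
  · obtain ⟨β, hβ, hβv⟩ := hv d ⟨hd, hle⟩
    exact ⟨β, hβ, fun i hβi hi _ => hβv i hβi hi⟩
  · obtain ⟨i₁, hi₁, hindex⟩ := hη.exists_index_bound hd hgt
    exact ⟨i₁, hi₁, fun i hi₁i hi hiδ => absurd (hindex i hi hiδ) (not_lt.2 hi₁i)⟩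

/-- For a fixed `δ ∈ S`, the set of conditions whose domain contains
    `δ ∪ {η_δ(i) : i < ω₁}` is dense in the uniformization forcing `P`. -/
theorem stmt15
    (S : Set Ordinal)
    (hS : ∀ δ ∈ S, δ < om2 ∧ δ.cof = Cardinal.aleph 1)
    (η : Ordinal → Ordinal → Ordinal)
    (hlt : ∀ δ ∈ S, ∀ i < om1, η δ i < δ)
    (hmono : ∀ δ ∈ S, ∀ i j : Ordinal, i < j → j < om1 → η δ i < η δ j)
    (hcont : ∀ δ ∈ S, ∀ γ, γ < om1 → Order.IsSuccLimit γ → η δ γ = sSup (η δ '' Set.Iio γ))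
    (hcofinal : ∀ δ ∈ S, ∀ β < δ, ∃ i, i < om1 ∧ β ≤ η δ i)
    (c : Ordinal → Ordinal → Bool) (E₀ : Set Ordinal) (hE₀ : E₀ ⊆ Set.Iio om1)
    (δ : Ordinal) (hδ : δ ∈ S)
    (p : Ordinal → Option Bool) (hp : IsCond S η c E₀ p) :
    ∃ q : Ordinal → Option Bool, IsCond S η c E₀ q ∧ Extends q p ∧
      (∀ β < δ, q β ≠ none) ∧ (∀ i < om1, q (η δ i) ≠ none) :=
  stmt15_general S hS η hlt hmono hcofinal c E₀ δ hδ p hp
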